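/- arXiv:2311.14025 — 2 statements merged into one kernel-verified Lean document; each statement's English description precedes it below -/
import Mathlib

section
/- Let T be a consistent complete theory, M a model of T with an interpreted arithmetic with standard part ω, and ρ(x) := ∃y (Prf_A(y,x) ∧ ∀z<y ¬Prf_A(z,¬x)) where Prf_A correctly represents, for standard arguments, proofs from an axiom set A that axiomatizes T. If ψ is an L-sentence with M ⊨ ψ, then M ⊨ ρ(⌜ψ⌝). -/
/-!
By completeness, the true sentence `ψ` is provable from `A`, say by the proof with standard
code `n`, and `∼ψ` is not, since a complete theory is consistent. Take `y := n`. Every `z < n`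
in `M` is a standard numeral `k < n`, and `Prf_A(k, ⌜∼ψ⌝)` holds in `M` only if `k` is a
genuine proof of `∼ψ`, which does not exist.
-/

open FirstOrder Language

namespace RosserTruth

variable {L : Language}

/-- The Rosser sentence `∃y (Prf(y,c) ∧ ∀z (z < y → ¬ Prf(z,cneg)))`, where `Prf` and
`lt` are two-variable formulas and `c`, `cneg` are the Gödel numerals of a sentence and
of its negation. -/
noncomputable def rosser (Prf lt : L.Formula (Fin 2)) (c cneg : L.Term Empty) :
    L.Sentence :=
  ∃' (((Prf.subst ![Term.var 0, c.relabel (fun x => x.elim)]).relabel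
          (fun _ => Sum.inr (0 : Fin 1)) : L.BoundedFormula Empty 1) ⊓
      ∀' ((( (lt.subst ![Term.var 1, Term.var 0]) ⟹
            ∼(Prf.subst ![Term.var 1, cneg.relabel (fun x => x.elim)])).relabel
          (fun i => Sum.inr i) : L.BoundedFormula Empty 2)))

theorem realize_rosser_iff {M : Type*} [L.Structure M] (Prf lt : L.Formula (Fin 2))
    (c cneg : L.Term Empty) :
    M ⊨ rosser Prf lt c cneg ↔
      ∃ y : M, Prf.Realize ![y, c.realize (fun x => x.elim)] ∧
        ∀ z : M, lt.Realize ![z, y] → ¬ Prf.Realize ![z, cneg.realize (fun x => x.elim)] := by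
  have closed_term :
      ∀ (t : L.Term Empty) (v : Empty → M), t.realize v = t.realize (fun x => x.elim) :=
    fun t v => congrArg t.realize (Subsingleton.elim _ _)
  simp only [rosser, Sentence.Realize, Formula.Realize, BoundedFormula.realize_ex,
    BoundedFormula.realize_inf, BoundedFormula.realize_all, BoundedFormula.realize_imp,
    BoundedFormula.realize_not, BoundedFormula.realize_relabel, BoundedFormula.realize_subst]
  refine exists_congr fun y => and_congr ?_ (forall_congr' fun z => imp_congr ?_ (not_congr ?_)) <;>
  · apply iff_of_eq
    congr 1
    · funext i
      fin_cases i <;> simp [Fin.snoc, closed_term]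
    · exact Subsingleton.elim _ _

theorem truth_implies_rosser_provability_general
    (T : L.Theory) (hcomp : T.IsComplete)
    (M : Type*) [L.Structure M] (hM : M ⊨ T)
    -- A axiomatizes T
    (A : L.Theory) (hA : ∀ φ : L.Sentence, A ⊨ᵇ φ ↔ T ⊨ᵇ φ)
    -- Gödel numbering of sentences, and numerals
    (codeS : L.Sentence → ℕ) (num : ℕ → L.Term Empty)
    -- the formulas Prf_A(y,x) and y < z of the interpreted arithmetic of M
    (Prf lt : L.Formula (Fin 2))
    -- `pf n φ` : the natural number n codes a genuine first-order proof of φ from A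
    (pf : ℕ → L.Sentence → Prop)
    -- the coded proof relation is sound and complete for provability from A
    (hsound : ∀ (n : ℕ) (φ : L.Sentence), pf n φ → A ⊨ᵇ φ)
    (hcompl : ∀ φ : L.Sentence, A ⊨ᵇ φ → ∃ n : ℕ, pf n φ)
    -- Prf_A correctly represents the proof relation on standard arguments
    (hPrf : ∀ (n : ℕ) (φ : L.Sentence),
      Prf.Realize (M := M)
        ![(num n).realize (fun x => x.elim), (num (codeS φ)).realize (fun x => x.elim)]
        ↔ pf n φ)
    -- standard numerals are downward closed in the interpreted arithmetic of M
    (hinit : ∀ (z : M) (n : ℕ),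
      lt.Realize (M := M) ![z, (num n).realize (fun x => x.elim)] →
        ∃ k : ℕ, k < n ∧ z = (num k).realize (fun x => x.elim))
    -- ψ is a sentence true in M
    (ψ : L.Sentence) (hψ : M ⊨ ψ) :
    M ⊨ rosser Prf lt (num (codeS ψ)) (num (codeS (∼ψ))) := by
  have : Nonempty M := ⟨(num 0).realize (fun x => x.elim)⟩
  have hTψ : T ⊨ᵇ ψ := (hcomp.realize_sentence_iff ψ M).1 hψ
  have hno_refutation : ∀ k, ¬ pf k (∼ψ) := fun k hk =>
    (hcomp.models_not_iff ψ).1 ((hA _).1 (hsound k _ hk)) hTψ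
  obtain ⟨n, hn⟩ := hcompl ψ ((hA ψ).2 hTψ)
  refine (realize_rosser_iff Prf lt _ _).2 ⟨_, (hPrf n ψ).2 hn, fun z hz hzPrf => ?_⟩
  obtain ⟨k, -, rfl⟩ := hinit z n hz
  exact hno_refutation k ((hPrf k (∼ψ)).1 hzPrf)

theorem truth_implies_rosser_provability
    (T : L.Theory) (hconsis : T.IsSatisfiable) (hcomp : T.IsComplete)
    (M : Type*) [L.Structure M] [Nonempty M] (hM : M ⊨ T)
    -- A axiomatizes T
    (A : L.Theory) (hA : ∀ φ : L.Sentence, A ⊨ᵇ φ ↔ T ⊨ᵇ φ)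
    -- Gödel numbering of sentences, and numerals
    (codeS : L.Sentence → ℕ) (num : ℕ → L.Term Empty)
    -- the formulas Prf_A(y,x) and y < z of the interpreted arithmetic of M
    (Prf lt : L.Formula (Fin 2))
    -- `pf n φ` : the natural number n codes a genuine first-order proof of φ from A
    (pf : ℕ → L.Sentence → Prop)
    -- the coded proof relation is sound and complete for provability from A
    (hsound : ∀ (n : ℕ) (φ : L.Sentence), pf n φ → A ⊨ᵇ φ)
    (hcompl : ∀ φ : L.Sentence, A ⊨ᵇ φ → ∃ n : ℕ, pf n φ)
    -- Prf_A correctly represents the proof relation on standard arguments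
    (hPrf : ∀ (n : ℕ) (φ : L.Sentence),
      Prf.Realize (M := M)
        ![(num n).realize (fun x => x.elim), (num (codeS φ)).realize (fun x => x.elim)]
        ↔ pf n φ)
    -- standard numerals are downward closed in the interpreted arithmetic of M
    (hinit : ∀ (z : M) (n : ℕ),
      lt.Realize (M := M) ![z, (num n).realize (fun x => x.elim)] →
        ∃ k : ℕ, k < n ∧ z = (num k).realize (fun x => x.elim))
    -- ψ is a sentence true in M
    (ψ : L.Sentence) (hψ : M ⊨ ψ) :
    M ⊨ rosser Prf lt (num (codeS ψ)) (num (codeS (∼ψ))) :=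
  truth_implies_rosser_provability_general T hcomp M hM A hA codeS num Prf lt pf hsound hcompl hPrf
    hinit ψ hψ

end RosserTruth
end

section
/- Suppose U is a theory in a language containing predicates T₁, T₂, ... such that for every sentence φ of the n-th language level Lₙ, U ⊢ φ ↔ Tₙ₊₁(⌜φ⌝). Then every complete consistent extension V of U is axiomatized by U together with a set of atomic sentences of the form Tₙ₊₁(⌜φ⌝); in particular, if U has bounded quantifier complexity, so does some axiomatization of V. -/
/- If U is a theory in a language with predicates T₁, T₂, ... such that for every
sentence φ of the n-th language level Lₙ we have U ⊢ φ ↔ Tₙ₊₁(⌜φ⌝), then every complete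
consistent extension V of U is axiomatized by U together with sentences of the form
Tₙ₊₁(⌜φ⌝).  (Hence if U has bounded quantifier complexity, so does some axiomatization
of every completion of it.) -/

open FirstOrder Language

namespace IteratedTruth

variable {L : Language}

/-- `φ(t)`: substitution of a closed term for the unique free variable. -/
noncomputable def app (φ : L.Formula (Fin 1)) (t : L.Term Empty) : L.Sentence :=
  φ.subst (fun _ => t)

theorem completion_axiomatized_by_truth_atoms
    (U : L.Theory)
    -- a Gödel numbering of sentences and numerals
    (codeS : L.Sentence → ℕ) (num : ℕ → L.Term Empty)
    -- `lvl n φ` means φ is a sentence of the n-th language level Lₙ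
    (lvl : ℕ → L.Sentence → Prop)
    -- every sentence lies in some level
    (hlvl : ∀ φ : L.Sentence, ∃ n, lvl n φ)
    -- `TPred (n+1)` is the formula `Tₙ₊₁(x)`; applying it to ⌜φ⌝ is the atomic
    -- sentence `Tₙ₊₁(⌜φ⌝)`
    (TPred : ℕ → L.Formula (Fin 1))
    -- U proves φ ↔ Tₙ₊₁(⌜φ⌝) for each Lₙ-sentence φ
    (hT : ∀ (n : ℕ) (φ : L.Sentence), lvl n φ →
      U ⊨ᵇ (φ ⇔ app (TPred (n + 1)) (num (codeS φ))))
    -- V is a complete consistent extension of U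
    (V : L.Theory) (hUV : ∀ φ ∈ U, V ⊨ᵇ φ) (hV : V.IsComplete) :
    ∀ ψ : L.Sentence,
      V ⊨ᵇ ψ ↔
      (U ∪ {χ | ∃ (n : ℕ) (φ : L.Sentence), lvl n φ ∧ V ⊨ᵇ φ ∧
          χ = app (TPred (n + 1)) (num (codeS φ))}) ⊨ᵇ ψ := by
  intro ψ
  constructor
  · intro hψ
    rw [Theory.models_sentence_iff] at hψ ⊢
    intro M
    have hMW : (M : Type _) ⊨ (U ∪ _) := M.is_model
    rw [Theory.model_union_iff] at hMW
    haveI hMU : (M : Type _) ⊨ U := hMW.1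
    obtain ⟨n, hn⟩ := hlvl ψ
    have hatom : (M : Type _) ⊨ app (TPred (n + 1)) (num (codeS ψ)) :=
      hMW.2.realize_of_mem _ ⟨n, ψ, hn, Theory.models_sentence_iff.2 hψ, rfl⟩
    have hiff := Theory.models_sentence_iff.1 (hT n ψ hn) (Theory.ModelType.of U M)
    simp only [Sentence.Realize, Formula.realize_iff] at hiff
    exact hiff.2 hatom
  · intro hψ
    rw [Theory.models_sentence_iff] at hψ ⊢
    intro M
    haveI hMU : (M : Type _) ⊨ U := ⟨fun φ hφ =>
      Theory.models_sentence_iff.1 (hUV φ hφ) M⟩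
    have hMS : (M : Type _) ⊨ {χ | ∃ (n : ℕ) (φ : L.Sentence), lvl n φ ∧ V ⊨ᵇ φ ∧
        χ = app (TPred (n + 1)) (num (codeS φ))} := by
      refine ⟨fun χ hχ => ?_⟩
      obtain ⟨n, φ, hn, hVφ, rfl⟩ := hχ
      have hiff := Theory.models_sentence_iff.1 (hT n φ hn) (Theory.ModelType.of U M)
      simp only [Sentence.Realize, Formula.realize_iff] at hiff
      exact hiff.1 (Theory.models_sentence_iff.1 hVφ M)
    haveI : (M : Type _) ⊨ (U ∪ {χ | ∃ (n : ℕ) (φ : L.Sentence), lvl n φ ∧ V ⊨ᵇ φ ∧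
        χ = app (TPred (n + 1)) (num (codeS φ))}) :=
      Theory.model_union_iff.2 ⟨hMU, hMS⟩
    exact hψ (Theory.ModelType.of _ M)

end IteratedTruth
end
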